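/- Let K ≫ 1 be a dyadic number. Let {S₁} be a family of horizontal 1×K^{-1}-rectangles partitioning [-1,1]² and {S₂} a family of vertical K^{-1}×1-rectangles partitioning [-1,1]². Then for every ε > 0 there is a constant C_ε (independent of K, f, and x) such that for all f : [-1,1]² → ℂ and all x ∈ ℝ³, |Ef(x)| ≤ C_ε ( K^{5ε} max_{τ ∈ 𝒞_K} |Ef_τ(x)| + K^{2ε} max_{j, S_j} |Ef_{S_j}(x)| + K³ · Br_{K^ε} Ef(x) ). -/

import Mathlib

open MeasureTheory Metric Set
open scoped ENNReal NNReal Real RealInnerProductSpace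

noncomputable section

abbrev E3 : Type := EuclideanSpace ℝ (Fin 3)

def UnitSq : Set (ℝ × ℝ) := Icc (-1) 1 ×ˢ Icc (-1) 1

/-- The extension operator of the hyperbolic paraboloid:
`Ef(x) = ∫_{[-1,1]²} e^{i(x₁ξ₁ + x₂ξ₂ + x₃ξ₁ξ₂)} f(ξ₁,ξ₂) dξ₁dξ₂`. -/
def ExtH (f : ℝ × ℝ → ℂ) (x : E3) : ℂ :=
  ∫ ξ in UnitSq,
    Complex.exp (Complex.I * ((x 0 * ξ.1 + x 1 * ξ.2 + x 2 * (ξ.1 * ξ.2) : ℝ) : ℂ)) * f ξ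

/-- The `ij`-th square of side `1/N` in the grid partition of `[-1,1]²`
(the collection `𝒞_K` of `1/K`-squares, `N = K`). -/
def cSq (N : ℕ) (ij : ℕ × ℕ) : Set (ℝ × ℝ) :=
  Icc (-1 + ij.1 / (N:ℝ)) (-1 + (ij.1 + 1) / (N:ℝ)) ×ˢ
  Icc (-1 + ij.2 / (N:ℝ)) (-1 + (ij.2 + 1) / (N:ℝ))

/-- An `A`-broad collection `𝒯 ⊆ 𝒞_K` (`K = N`): `#𝒯 ≥ A` and, for each `j = 1,2`,
the `j`-th coordinates of the centers of the squares of `𝒯` are pairwise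
`2/N`-separated (i.e. the indices are `2`-separated). -/
def IsBroadFam (N : ℕ) (A : ℝ) (𝒯 : Finset (ℕ × ℕ)) : Prop :=
  𝒯 ⊆ Finset.range (2 * N) ×ˢ Finset.range (2 * N) ∧ A ≤ (𝒯.card : ℝ) ∧
  ∀ t ∈ 𝒯, ∀ t' ∈ 𝒯, t ≠ t' →
    2 ≤ |(t.1 : ℝ) - (t'.1 : ℝ)| ∧ 2 ≤ |(t.2 : ℝ) - (t'.2 : ℝ)|

/-- The broad function `Br_A Ef(x) = max_{𝒯 A-broad} min_{τ ∈ 𝒯} |Ef_τ(x)|`,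
where `f_τ = f·𝟙_τ`. -/
def BrExt (N : ℕ) (A : ℝ) (f : ℝ × ℝ → ℂ) (x : E3) : ℝ≥0∞ :=
  ⨆ (𝒯 : Finset (ℕ × ℕ)) (_ : IsBroadFam N A 𝒯),
    ⨅ t ∈ 𝒯, (‖ExtH ((cSq N t).indicator f) x‖₊ : ℝ≥0∞)

/-- The `j`-th horizontal `1 × K^{-1}`-rectangle (row) of `[-1,1]²`, `K = N`. -/
def rowRect (N : ℕ) (j : ℕ) : Set (ℝ × ℝ) :=
  Icc (-1 : ℝ) 1 ×ˢ Icc (-1 + j / (N:ℝ)) (-1 + (j + 1) / (N:ℝ))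

/-- The `j`-th vertical `K^{-1} × 1`-rectangle (column) of `[-1,1]²`, `K = N`. -/
def colRect (N : ℕ) (j : ℕ) : Set (ℝ × ℝ) :=
  Icc (-1 + j / (N:ℝ)) (-1 + (j + 1) / (N:ℝ)) ×ˢ Icc (-1 : ℝ) 1
open Function

/-!
Split `[-1,1]²` into the `(2K)²` squares `τ` of `𝒞_K`: `Ef` is the sum of the `Ef_τ`, and each
row or column `Ef_S` is the sum of the `Ef_τ` over its squares. Call `τ` significant if
`|Ef_τ(x)| ≥ |Ef(x)| / (8K²)` and take a maximal family of pairwise separated significant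
squares. If it has at least `K^ε` members it is `K^ε`-broad, so `|Ef(x)| ≤ 8K² Br_{K^ε} Ef(x)`.
Otherwise every significant square lies in one of the fewer than `3K^ε` rows `R` or columns `C`
adjacent to the family. Writing `Ef` as the sum of the rows in `R`, the columns in `C` with their
squares in `R` removed, and the remaining (insignificant) squares gives
`|Ef| ≤ 3K^ε M_S + 3K^ε (M_S + 3K^ε M_τ) + |Ef| / 2`, where `M_S = max |Ef_S(x)|` over rows and
columns and `M_τ = max |Ef_τ(x)|`.
-/

theorem MeasureTheory.integral_biUnion_finset₀ {X E ι : Type*} [MeasurableSpace X]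
    {μ : Measure X} [NormedAddCommGroup E] [NormedSpace ℝ E] {f : X → E}
    (t : Finset ι) {s : ι → Set X} (hs : ∀ i ∈ t, NullMeasurableSet (s i) μ)
    (h's : (t : Set ι).Pairwise (AEDisjoint μ on s)) (hf : ∀ i ∈ t, IntegrableOn f (s i) μ) :
    ∫ x in ⋃ i ∈ t, s i, f x ∂μ = ∑ i ∈ t, ∫ x in s i, f x ∂μ := by
  classical
  induction t using Finset.induction_on with
  | empty => simp
  | insert a t hat IH =>
    simp only [Finset.coe_insert, Finset.forall_mem_insert, Set.pairwise_insert,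
      Finset.set_biUnion_insert] at hs hf h's ⊢
    have hd : AEDisjoint μ (s a) (⋃ i ∈ t, s i) := by
      rw [AEDisjoint, Set.inter_iUnion₂]
      exact (measure_biUnion_null_iff t.countable_toSet).2 fun i hi =>
        (h's.2 i hi (ne_of_mem_of_not_mem hi hat).symm).1
    rw [setIntegral_union₀ hd (t.nullMeasurableSet_biUnion hs.2) hf.1
      (integrableOn_finset_iUnion.2 hf.2), Finset.sum_insert hat, IH hs.2 h's.1 hf.2]

theorem MeasureTheory.AEDisjoint.prod_left {α β : Type*} [MeasurableSpace α]
    [MeasurableSpace β] {μ : Measure α} {ν : Measure β} [SFinite ν] {s s' : Set α}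
    (h : AEDisjoint μ s s') (t t' : Set β) : AEDisjoint (μ.prod ν) (s ×ˢ t) (s' ×ˢ t') := by
  rw [AEDisjoint, Set.prod_inter_prod, Measure.prod_prod, h.eq, zero_mul]

theorem MeasureTheory.AEDisjoint.prod_right {α β : Type*} [MeasurableSpace α]
    [MeasurableSpace β] {μ : Measure α} {ν : Measure β} [SFinite ν] {t t' : Set β}
    (h : AEDisjoint ν t t') (s s' : Set α) : AEDisjoint (μ.prod ν) (s ×ˢ t) (s' ×ˢ t') := by
  rw [AEDisjoint, Set.prod_inter_prod, Measure.prod_prod, h.eq, mul_zero]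

theorem Monotone.biUnion_range_Icc {α : Type*} [LinearOrder α] {a : ℕ → α} (ha : Monotone a)
    {n : ℕ} (hn : n ≠ 0) : ⋃ k ∈ Finset.range n, Icc (a k) (a (k + 1)) = Icc (a 0) (a n) := by
  induction n with
  | zero => exact absurd rfl hn
  | succ n ih =>
    rcases Nat.eq_zero_or_pos n with rfl | hpos
    · simp
    rw [Finset.range_add_one, Finset.set_biUnion_insert, ih hpos.ne', Set.union_comm,
      Icc_union_Icc_eq_Icc (ha n.zero_le) (ha n.le_succ)]

theorem Monotone.pairwise_aedisjoint_Icc {α : Type*} [LinearOrder α] [MeasurableSpace α]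
    {μ : Measure α} [NullSingletonClass μ] {a : ℕ → α} (ha : Monotone a) :
    Pairwise (AEDisjoint μ on fun k => Icc (a k) (a (k + 1))) := fun _ _ hkl =>
  ((ha.pairwise_disjoint_on_Ioc_succ hkl).aedisjoint).congr Ioc_ae_eq_Icc.symm
    Ioc_ae_eq_Icc.symm

def gridPt (N i : ℕ) : ℝ := -1 + i / (N : ℝ)

/-- `cSq`, `rowRect` and `colRect` are products of these intervals (and `Icc (-1) 1`)
definitionally. -/
def gridIcc (N i : ℕ) : Set ℝ := Icc (-1 + i / (N : ℝ)) (-1 + (i + 1) / (N : ℝ))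

theorem gridIcc_eq (N i : ℕ) : gridIcc N i = Icc (gridPt N i) (gridPt N (i + 1)) := by
  simp [gridIcc, gridPt]

theorem gridPt_mono (N : ℕ) : Monotone (gridPt N) := fun i j hij => by
  unfold gridPt
  gcongr

theorem biUnion_gridIcc {N : ℕ} (hN : N ≠ 0) :
    ⋃ i ∈ Finset.range (2 * N), gridIcc N i = Icc (-1) 1 := by
  simp_rw [gridIcc_eq]
  rw [(gridPt_mono N).biUnion_range_Icc (by positivity), gridPt, gridPt, Nat.cast_zero, zero_div,
    add_zero, Nat.cast_mul, Nat.cast_ofNat, mul_div_cancel_right₀ _ (Nat.cast_ne_zero.2 hN)]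
  norm_num

theorem pairwise_aedisjoint_gridIcc (N : ℕ) : Pairwise (AEDisjoint volume on gridIcc N) := by
  rw [funext (gridIcc_eq N)]
  exact (gridPt_mono N).pairwise_aedisjoint_Icc

theorem unitSq_eq_biUnion_rowRect {N : ℕ} (hN : N ≠ 0) :
    UnitSq = ⋃ j ∈ Finset.range (2 * N), rowRect N j :=
  calc UnitSq = Icc (-1) 1 ×ˢ ⋃ j ∈ Finset.range (2 * N), gridIcc N j := by
        rw [biUnion_gridIcc hN]; rfl
    _ = _ := Set.prod_iUnion₂

theorem rowRect_eq_biUnion_cSq {N : ℕ} (hN : N ≠ 0) (j : ℕ) :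
    rowRect N j = ⋃ i ∈ Finset.range (2 * N), cSq N (i, j) :=
  calc rowRect N j = (⋃ i ∈ Finset.range (2 * N), gridIcc N i) ×ˢ gridIcc N j := by
        rw [biUnion_gridIcc hN]; rfl
    _ = _ := Set.iUnion₂_prod_const

theorem colRect_eq_biUnion_cSq {N : ℕ} (hN : N ≠ 0) (i : ℕ) :
    colRect N i = ⋃ j ∈ Finset.range (2 * N), cSq N (i, j) :=
  calc colRect N i = gridIcc N i ×ˢ ⋃ j ∈ Finset.range (2 * N), gridIcc N j := by
        rw [biUnion_gridIcc hN]; rfl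
    _ = _ := Set.prod_iUnion₂

theorem measurableSet_unitSq : MeasurableSet UnitSq :=
  measurableSet_Icc.prod measurableSet_Icc

theorem measurableSet_cSq (N : ℕ) (ij : ℕ × ℕ) : MeasurableSet (cSq N ij) :=
  measurableSet_Icc.prod measurableSet_Icc

def extPhase (x : E3) (ξ : ℝ × ℝ) : ℂ :=
  Complex.exp (Complex.I * ((x 0 * ξ.1 + x 1 * ξ.2 + x 2 * (ξ.1 * ξ.2) : ℝ) : ℂ))

section ExtH

variable (f : ℝ × ℝ → ℂ) (x : E3)

theorem ExtH_indicator_eq_setIntegral {A : Set (ℝ × ℝ)} (hA : MeasurableSet A) :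
    ExtH (A.indicator f) x = ∫ ξ in UnitSq ∩ A, extPhase x ξ * f ξ :=
  calc ExtH (A.indicator f) x = ∫ ξ in UnitSq, A.indicator (fun ξ => extPhase x ξ * f ξ) ξ := by
        refine integral_congr_ae (ae_of_all _ fun ξ => ?_)
        exact (Set.indicator_mul_right A (extPhase x) f).symm
    _ = _ := setIntegral_indicator hA

theorem ExtH_indicator_unitSq : ExtH (UnitSq.indicator f) x = ExtH f x := by
  rw [ExtH_indicator_eq_setIntegral f x measurableSet_unitSq, inter_self]
  rfl

variable {f x}

theorem ExtH_indicator_biUnion (hf : IntegrableOn (fun ξ => extPhase x ξ * f ξ) UnitSq)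
    {ι : Type*} (t : Finset ι) {A : ι → Set (ℝ × ℝ)} (hA : ∀ i ∈ t, MeasurableSet (A i))
    (hd : (t : Set ι).Pairwise (AEDisjoint volume on A)) :
    ExtH ((⋃ i ∈ t, A i).indicator f) x = ∑ i ∈ t, ExtH ((A i).indicator f) x := by
  rw [ExtH_indicator_eq_setIntegral f x (t.measurableSet_biUnion hA), Set.inter_iUnion₂,
    integral_biUnion_finset₀ t
      (fun i hi => (measurableSet_unitSq.inter (hA i hi)).nullMeasurableSet)
      (fun i hi j hj hij => (hd hi hj hij).mono inter_subset_right inter_subset_right)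
      (fun i _ => hf.mono_set inter_subset_left)]
  exact Finset.sum_congr rfl fun i hi => (ExtH_indicator_eq_setIntegral f x (hA i hi)).symm

variable {N : ℕ} (hN : N ≠ 0) (hf : IntegrableOn (fun ξ => extPhase x ξ * f ξ) UnitSq)
include hN hf

theorem ExtH_eq_sum_rowRect :
    ExtH f x = ∑ j ∈ Finset.range (2 * N), ExtH ((rowRect N j).indicator f) x := by
  rw [← ExtH_indicator_unitSq, unitSq_eq_biUnion_rowRect hN]
  exact ExtH_indicator_biUnion hf _ (fun j _ => measurableSet_Icc.prod measurableSet_Icc)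
    fun j _ k _ hjk => (pairwise_aedisjoint_gridIcc N hjk).prod_right _ _

theorem ExtH_rowRect_eq_sum_cSq (j : ℕ) :
    ExtH ((rowRect N j).indicator f) x =
      ∑ i ∈ Finset.range (2 * N), ExtH ((cSq N (i, j)).indicator f) x := by
  rw [rowRect_eq_biUnion_cSq hN]
  exact ExtH_indicator_biUnion hf _ (fun i _ => measurableSet_cSq N _)
    fun i _ k _ hik => (pairwise_aedisjoint_gridIcc N hik).prod_left _ _

theorem ExtH_colRect_eq_sum_cSq (i : ℕ) :
    ExtH ((colRect N i).indicator f) x =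
      ∑ j ∈ Finset.range (2 * N), ExtH ((cSq N (i, j)).indicator f) x := by
  rw [colRect_eq_biUnion_cSq hN]
  exact ExtH_indicator_biUnion hf _ (fun j _ => measurableSet_cSq N _)
    fun j _ k _ hjk => (pairwise_aedisjoint_gridIcc N hjk).prod_right _ _

end ExtH

theorem Finset.exists_maximal_pairwise_subset {α : Type*} [DecidableEq α] (r : α → α → Prop)
    (S : Finset α) :
    ∃ T ⊆ S, (T : Set α).Pairwise r ∧ ∀ a ∈ S \ T, ∃ b ∈ T, ¬ (r a b ∧ r b a) := by
  classical
  obtain ⟨T, hT, hmax⟩ := Finset.exists_max_image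
    (S.powerset.filter fun T : Finset α => (T : Set α).Pairwise r) Finset.card ⟨∅, by simp⟩
  rw [Finset.mem_filter, Finset.mem_powerset] at hT
  refine ⟨T, hT.1, hT.2, fun a ha => ?_⟩
  rw [Finset.mem_sdiff] at ha
  by_contra! h
  have hins := hmax (insert a T) <| by
    rw [Finset.mem_filter, Finset.mem_powerset, Finset.coe_insert]
    exact ⟨Finset.insert_subset ha.1 hT.1, hT.2.insert_of_notMem ha.2 h⟩
  rw [Finset.card_insert_of_notMem ha.2] at hins
  omega

theorem Finset.card_biUnion_Icc_le {ι : Type*} [DecidableEq ι] (T : Finset ι) (g : ι → ℕ) :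
    (T.biUnion fun t => Finset.Icc (g t - 1) (g t + 1)).card ≤ 3 * T.card :=
  calc _ ≤ ∑ t ∈ T, (Finset.Icc (g t - 1) (g t + 1)).card := Finset.card_biUnion_le
    _ ≤ ∑ _t ∈ T, 3 := Finset.sum_le_sum fun t _ => by rw [Nat.card_Icc]; omega
    _ = 3 * T.card := by rw [Finset.sum_const, smul_eq_mul, mul_comm]

theorem Nat.mem_Icc_of_abs_sub_lt_two {p q : ℕ} (h : |(p : ℝ) - q| < 2) :
    p ∈ Finset.Icc (q - 1) (q + 1) := by
  obtain ⟨h₁, h₂⟩ := abs_lt.1 h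
  have h₁' : (q : ℝ) < p + 2 := by linarith
  have h₂' : (p : ℝ) < q + 2 := by linarith
  norm_cast at h₁' h₂'
  rw [Finset.mem_Icc]
  omega

theorem exists_broad_or_narrow (N : ℕ) (A δ : ℝ) (w : ℕ × ℕ → ℝ) :
    (∃ 𝒯, IsBroadFam N A 𝒯 ∧ ∀ t ∈ 𝒯, δ ≤ w t) ∨
    ∃ R C : Finset ℕ, R ⊆ Finset.range (2 * N) ∧ C ⊆ Finset.range (2 * N) ∧
      (R.card : ℝ) < 3 * A ∧ (C.card : ℝ) < 3 * A ∧
      ∀ i ∈ Finset.range (2 * N), ∀ j ∈ Finset.range (2 * N), i ∉ C → j ∉ R → w (i, j) < δ := by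
  set S := (Finset.range (2 * N) ×ˢ Finset.range (2 * N)).filter fun τ => δ ≤ w τ
  obtain ⟨𝒯, h𝒯S, hsep, hmax⟩ := S.exists_maximal_pairwise_subset
    fun t t' : ℕ × ℕ => 2 ≤ |(t.1 : ℝ) - (t'.1 : ℝ)| ∧ 2 ≤ |(t.2 : ℝ) - (t'.2 : ℝ)|
  by_cases hA : A ≤ 𝒯.card
  · exact Or.inl ⟨𝒯, ⟨h𝒯S.trans (Finset.filter_subset _ _), hA, hsep⟩,
      fun t ht => (Finset.mem_filter.1 (h𝒯S ht)).2⟩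
  set R := Finset.range (2 * N) ∩ 𝒯.biUnion fun t => Finset.Icc (t.2 - 1) (t.2 + 1)
  set C := Finset.range (2 * N) ∩ 𝒯.biUnion fun t => Finset.Icc (t.1 - 1) (t.1 + 1)
  have hcard (g : ℕ × ℕ → ℕ) :
      ((Finset.range (2 * N) ∩ 𝒯.biUnion fun t => Finset.Icc (g t - 1) (g t + 1)).card : ℝ)
        < 3 * A := by
    have h := (Finset.card_le_card (Finset.inter_subset_right (s₁ := Finset.range (2 * N)))).trans
      (𝒯.card_biUnion_Icc_le g)
    rify at h
    linarith
  refine Or.inr ⟨R, C, Finset.inter_subset_left, Finset.inter_subset_left, hcard _, hcard _,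
    fun i hi j hj hiC hjR => ?_⟩
  by_contra! hw
  have hS : (i, j) ∈ S := Finset.mem_filter.2 ⟨Finset.mem_product.2 ⟨hi, hj⟩, hw⟩
  by_cases h𝒯 : (i, j) ∈ 𝒯
  · exact hiC (Finset.mem_inter.2 ⟨hi, Finset.mem_biUnion.2 ⟨_, h𝒯, by simp⟩⟩)
  obtain ⟨t, ht, hnear⟩ := hmax (i, j) (Finset.mem_sdiff.2 ⟨hS, h𝒯⟩)
  by_cases hi' : 2 ≤ |(i : ℝ) - t.1|
  · refine hjR (Finset.mem_inter.2 ⟨hj, Finset.mem_biUnion.2 ⟨t, ht, ?_⟩⟩)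
    refine Nat.mem_Icc_of_abs_sub_lt_two (not_le.1 fun hj' => hnear ⟨⟨hi', hj'⟩, ?_, ?_⟩)
    · rwa [abs_sub_comm]
    · rwa [abs_sub_comm]
  · exact hiC (Finset.mem_inter.2 ⟨hi, Finset.mem_biUnion.2
      ⟨t, ht, Nat.mem_Icc_of_abs_sub_lt_two (not_le.1 hi')⟩⟩)

theorem norm_sum_le_card_mul {ι E : Type*} [SeminormedAddCommGroup E] (s : Finset ι)
    {f : ι → E} {M : ℝ} (h : ∀ i ∈ s, ‖f i‖ ≤ M) : ‖∑ i ∈ s, f i‖ ≤ s.card * M :=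
  (norm_sum_le _ _).trans <| (Finset.sum_le_card_nsmul _ _ _ h).trans_eq (nsmul_eq_mul _ _)

theorem norm_sum_grid_le {E : Type*} [SeminormedAddCommGroup E] (e : ℕ × ℕ → E) {n : ℕ}
    {R C : Finset ℕ} (hR : R ⊆ Finset.range n) (hC : C ⊆ Finset.range n) {Mr Mc M δ : ℝ}
    (hrow : ∀ j ∈ R, ‖∑ i ∈ Finset.range n, e (i, j)‖ ≤ Mr)
    (hcol : ∀ i ∈ C, ‖∑ j ∈ Finset.range n, e (i, j)‖ ≤ Mc)
    (hsq : ∀ i ∈ C, ∀ j ∈ R, ‖e (i, j)‖ ≤ M) (hδ : 0 ≤ δ)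
    (hsmall : ∀ i ∈ Finset.range n, ∀ j ∈ Finset.range n, i ∉ C → j ∉ R → ‖e (i, j)‖ ≤ δ) :
    ‖∑ j ∈ Finset.range n, ∑ i ∈ Finset.range n, e (i, j)‖ ≤
      R.card * Mr + C.card * (Mc + R.card * M) + n ^ 2 * δ := by
  have hsplit : ∑ j ∈ Finset.range n, ∑ i ∈ Finset.range n, e (i, j) =
      ∑ j ∈ R, ∑ i ∈ Finset.range n, e (i, j) +
      ∑ i ∈ C, (∑ j ∈ Finset.range n, e (i, j) - ∑ j ∈ R, e (i, j)) +
      ∑ i ∈ Finset.range n \ C, ∑ j ∈ Finset.range n \ R, e (i, j) := by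
    simp_rw [← Finset.sum_sdiff_eq_sub hR]
    rw [← Finset.sum_sdiff hR, Finset.sum_comm (s := Finset.range n \ R), ← Finset.sum_sdiff hC]
    abel
  have hrest : ‖∑ i ∈ Finset.range n \ C, ∑ j ∈ Finset.range n \ R, e (i, j)‖ ≤ n ^ 2 * δ := by
    refine (norm_sum_le_card_mul _ fun i hi =>
      norm_sum_le_card_mul (M := δ) _ fun j hj => ?_).trans ?_
    · rw [Finset.mem_sdiff] at hi hj
      exact hsmall i hi.1 j hj.1 hi.2 hj.2
    · have hcard (s : Finset ℕ) : (Finset.range n \ s).card ≤ n :=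
        (Finset.card_le_card Finset.sdiff_subset).trans (Finset.card_range n).le
      rw [sq, mul_assoc]
      gcongr
      · exact hcard C
      · exact hcard R
  rw [hsplit]
  refine (norm_add₃_le).trans (add_le_add (add_le_add (norm_sum_le_card_mul _ hrow)
    (norm_sum_le_card_mul _ fun i hi => ?_)) hrest)
  exact (norm_sub_le _ _).trans (add_le_add (hcol i hi) (norm_sum_le_card_mul _ (hsq i hi)))

theorem ofReal_le_BrExt {N : ℕ} {A δ : ℝ} {f : ℝ × ℝ → ℂ} {x : E3} {𝒯 : Finset (ℕ × ℕ)}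
    (h𝒯 : IsBroadFam N A 𝒯) (hδ : ∀ t ∈ 𝒯, δ ≤ ‖ExtH ((cSq N t).indicator f) x‖) :
    ENNReal.ofReal δ ≤ BrExt N A f x :=
  le_iSup₂_of_le 𝒯 h𝒯 <| le_iInf₂ fun t ht => by
    rw [← enorm_eq_nnnorm, ← ofReal_norm]
    exact ENNReal.ofReal_le_ofReal (hδ t ht)

theorem norm_ExtH_le_or_le_BrExt {N : ℕ} (hN : N ≠ 0) (A : ℝ) (f : ℝ × ℝ → ℂ) (x : E3)
    {Msq Mline : ℝ}
    (hsq : ∀ i ∈ Finset.range (2 * N), ∀ j ∈ Finset.range (2 * N),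
      ‖ExtH ((cSq N (i, j)).indicator f) x‖ ≤ Msq)
    (hrow : ∀ j ∈ Finset.range (2 * N), ‖ExtH ((rowRect N j).indicator f) x‖ ≤ Mline)
    (hcol : ∀ i ∈ Finset.range (2 * N), ‖ExtH ((colRect N i).indicator f) x‖ ≤ Mline) :
    ‖ExtH f x‖ ≤ 18 * A ^ 2 * Msq + 12 * A * Mline ∨
      ENNReal.ofReal (‖ExtH f x‖ / (8 * (N : ℝ) ^ 2)) ≤ BrExt N A f x := by
  by_cases hf : IntegrableOn (fun ξ => extPhase x ξ * f ξ) UnitSq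
  swap
  · right -- the Bochner integral of a non-integrable function is `0`
    rw [show ExtH f x = 0 from integral_undef hf]
    simp
  set δ := ‖ExtH f x‖ / (8 * (N : ℝ) ^ 2) with hδ_def
  obtain ⟨𝒯, h𝒯, hδ⟩ | ⟨R, C, hR, hC, hRA, hCA, hsmall⟩ :=
    exists_broad_or_narrow N A δ fun ij => ‖ExtH ((cSq N ij).indicator f) x‖
  · exact Or.inr (ofReal_le_BrExt h𝒯 hδ)
  left
  have hnarrow := norm_sum_grid_le (fun ij => ExtH ((cSq N ij).indicator f) x) hR hC
    (fun j hj => (ExtH_rowRect_eq_sum_cSq hN hf j).symm ▸ hrow j (hR hj))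
    (fun i hi => (ExtH_colRect_eq_sum_cSq hN hf i).symm ▸ hcol i (hC hi))
    (fun i hi j hj => hsq i (hC hi) j (hR hj)) (by positivity)
    (fun i hi j hj hiC hjR => (hsmall i hi j hj hiC hjR).le)
  simp_rw [← ExtH_rowRect_eq_sum_cSq hN hf, ← ExtH_eq_sum_rowRect hN hf] at hnarrow
  have hδ : ((2 * N : ℕ) : ℝ) ^ 2 * δ = ‖ExtH f x‖ / 2 := by
    rw [hδ_def]
    push_cast
    field_simp
    ring
  have hpos : 0 < 2 * N := by omega
  have hMline : 0 ≤ Mline := (norm_nonneg _).trans (hrow 0 (Finset.mem_range.2 hpos))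
  have hMsq : 0 ≤ Msq :=
    (norm_nonneg _).trans (hsq 0 (Finset.mem_range.2 hpos) 0 (Finset.mem_range.2 hpos))
  have hrows : R.card * Mline ≤ 3 * A * Mline := mul_le_mul_of_nonneg_right hRA.le hMline
  have hcols : C.card * (Mline + R.card * Msq) ≤ 3 * A * (Mline + 3 * A * Msq) := by
    have : (0 : ℝ) ≤ C.card := Nat.cast_nonneg _
    gcongr
    linarith
  nlinarith

theorem ENNReal.biSup_coe_eq_coe_finset_sup {ι : Type*} (s : Finset ι) (g : ι → ℝ≥0) :
    ⨆ i ∈ s, (g i : ℝ≥0∞) = ((s.sup g : ℝ≥0) : ℝ≥0∞) := by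
  rw [ENNReal.coe_finset_sup, Finset.sup_eq_iSup]

theorem enorm_ExtH_le {N : ℕ} (hN : N ≠ 0) {A : ℝ} (hA : 0 ≤ A) (f : ℝ × ℝ → ℂ) (x : E3) :
    (‖ExtH f x‖₊ : ℝ≥0∞) ≤
      ENNReal.ofReal (18 * A ^ 2) *
          (⨆ ij ∈ Finset.range (2 * N) ×ˢ Finset.range (2 * N),
            (‖ExtH ((cSq N ij).indicator f) x‖₊ : ℝ≥0∞)) +
        ENNReal.ofReal (12 * A) *
          ((⨆ j ∈ Finset.range (2 * N), (‖ExtH ((rowRect N j).indicator f) x‖₊ : ℝ≥0∞)) ⊔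
            (⨆ j ∈ Finset.range (2 * N), (‖ExtH ((colRect N j).indicator f) x‖₊ : ℝ≥0∞))) +
        ENNReal.ofReal (8 * (N : ℝ) ^ 2) * BrExt N A f x := by
  set Msq := (Finset.range (2 * N) ×ˢ Finset.range (2 * N)).sup
    fun ij => ‖ExtH ((cSq N ij).indicator f) x‖₊
  set Mrow := (Finset.range (2 * N)).sup fun j => ‖ExtH ((rowRect N j).indicator f) x‖₊
  set Mcol := (Finset.range (2 * N)).sup fun j => ‖ExtH ((colRect N j).indicator f) x‖₊
  simp only [ENNReal.biSup_coe_eq_coe_finset_sup]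
  rw [← ENNReal.coe_max]
  obtain hnarrow | hbroad := norm_ExtH_le_or_le_BrExt hN A f x (Msq := Msq) (Mline := max Mrow Mcol)
    (fun i hi j hj => Finset.le_sup (f := fun ij => ‖ExtH ((cSq N ij).indicator f) x‖₊)
      (Finset.mem_product.2 ⟨hi, hj⟩))
    (fun j hj => le_max_of_le_left
      (Finset.le_sup (f := fun j => ‖ExtH ((rowRect N j).indicator f) x‖₊) hj))
    (fun j hj => le_max_of_le_right
      (Finset.le_sup (f := fun j => ‖ExtH ((colRect N j).indicator f) x‖₊) hj))
  · calc (‖ExtH f x‖₊ : ℝ≥0∞) = ENNReal.ofReal ‖ExtH f x‖ := (ofReal_norm _).symm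
      _ ≤ ENNReal.ofReal (18 * A ^ 2 * Msq + 12 * A * (max Mrow Mcol : ℝ≥0)) :=
        ENNReal.ofReal_le_ofReal hnarrow
      _ = ENNReal.ofReal (18 * A ^ 2) * Msq + ENNReal.ofReal (12 * A) * (max Mrow Mcol : ℝ≥0) := by
        rw [ENNReal.ofReal_add (by positivity) (by positivity),
          ENNReal.ofReal_mul (by positivity : (0 : ℝ) ≤ 18 * A ^ 2),
          ENNReal.ofReal_mul (by positivity : (0 : ℝ) ≤ 12 * A), ENNReal.ofReal_coe_nnreal,
          ENNReal.ofReal_coe_nnreal]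
      _ ≤ _ := le_self_add
  · calc (‖ExtH f x‖₊ : ℝ≥0∞)
        = ENNReal.ofReal (8 * (N : ℝ) ^ 2 * (‖ExtH f x‖ / (8 * (N : ℝ) ^ 2))) := by
          rw [mul_div_cancel₀ _ (by positivity), ofReal_norm, enorm_eq_nnnorm]
      _ = ENNReal.ofReal (8 * (N : ℝ) ^ 2) * ENNReal.ofReal (‖ExtH f x‖ / (8 * (N : ℝ) ^ 2)) :=
        ENNReal.ofReal_mul (by positivity)
      _ ≤ ENNReal.ofReal (8 * (N : ℝ) ^ 2) * BrExt N A f x := by gcongr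
      _ ≤ _ := le_add_self

/-- **The broad–narrow reduction** (Proposition 4.9): let `K = 2^m ≫ 1` be dyadic, let
`{S₁}` (rows) and `{S₂}` (columns) be the partitions of `[-1,1]²` into horizontal
`1 × K^{-1}`- and vertical `K^{-1} × 1`-rectangles. Then for every `ε > 0` there is
`C_ε` (independent of `K`, `f` and `x`) such that for all `f` and all `x ∈ ℝ³`,
`|Ef(x)| ≤ C_ε (K^{5ε} max_{τ ∈ 𝒞_K} |Ef_τ(x)| + K^{2ε} max_{S_j} |Ef_{S_j}(x)|
+ K³ Br_{K^ε} Ef(x))`. -/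
theorem broad_narrow_reduction :
    ∀ ε > (0:ℝ), ∃ Cε > (0:ℝ), ∀ m : ℕ, 1 ≤ m → ∀ f : ℝ × ℝ → ℂ, ∀ x : E3,
      (‖ExtH f x‖₊ : ℝ≥0∞) ≤
        ENNReal.ofReal Cε *
          (ENNReal.ofReal (((2 ^ m : ℕ) : ℝ) ^ (5 * ε)) *
              (⨆ ij ∈ Finset.range (2 * 2 ^ m) ×ˢ Finset.range (2 * 2 ^ m),
                (‖ExtH ((cSq (2 ^ m) ij).indicator f) x‖₊ : ℝ≥0∞)) +
            ENNReal.ofReal (((2 ^ m : ℕ) : ℝ) ^ (2 * ε)) *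
              ((⨆ j ∈ Finset.range (2 * 2 ^ m),
                  (‖ExtH ((rowRect (2 ^ m) j).indicator f) x‖₊ : ℝ≥0∞)) ⊔
               (⨆ j ∈ Finset.range (2 * 2 ^ m),
                  (‖ExtH ((colRect (2 ^ m) j).indicator f) x‖₊ : ℝ≥0∞))) +
            ENNReal.ofReal (((2 ^ m : ℕ) : ℝ) ^ 3) *
              BrExt (2 ^ m) (((2 ^ m : ℕ) : ℝ) ^ ε) f x) := by
  intro ε hε
  refine ⟨18, by norm_num, fun m _ f x => ?_⟩
  set N := 2 ^ m
  have hN : (1 : ℝ) ≤ N := by exact_mod_cast Nat.one_le_two_pow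
  refine (enorm_ExtH_le (pow_ne_zero m two_ne_zero) (by positivity : 0 ≤ (N : ℝ) ^ ε) f x).trans ?_
  simp only [mul_add, ← mul_assoc, ← ENNReal.ofReal_mul (by norm_num : (0 : ℝ) ≤ 18)]
  gcongr
  · rw [← Real.rpow_natCast, ← Real.rpow_mul (by positivity)]
    exact Real.rpow_le_rpow_of_exponent_le hN (by push_cast; linarith)
  all_goals linarith
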